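/- arXiv:2602.06339 — 3 statements merged into one kernel-verified Lean document; each statement's English description precedes it below -/
import Mathlib

section
/- Let Z ⊆ ℝ^m be a nonempty, open, path-connected set and let μ be a probability measure on ℝ^m, absolutely continuous with respect to Lebesgue measure, whose density ρ satisfies ρ(z) > 0 for almost every z ∈ Z and, for every compact K ⊆ Z, ρ(z) ≥ ρ_min(K) for almost every z ∈ K for some constant ρ_min(K) > 0. Let f : Z → ℝ^d be continuous, let A_safe ⊆ ℝ^d have two distinct path-connected components U_L and U_R, and suppose the forbidden region A_forb := ℝ^d \ A_safe is open in ℝ^d. If there exist z_L, z_R ∈ Z with f(z_L) ∈ U_L and f(z_R) ∈ U_R, then the seam set {z ∈ Z : f(z) ∈ A_forb} is nonempty, open in Z, and has strictly positive μ-measure: μ({z ∈ Z : f(z) ∈ A_forb}) > 0. -/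
/-!
If `f` never left `A_safe` on `Z`, the image of the path-connected set `Z` would be a
path-connected subset of `A_safe` meeting both `U_L` and `U_R`, forcing `U_L = U_R`. So the
seam is nonempty; it is open as the preimage of an open set under a map continuous on the open
set `Z`, hence has positive Lebesgue measure, and a density that is a.e. positive on it gives it
positive `μ`-mass.
-/

open MeasureTheory Set

theorem ContinuousOn.pathComponentIn_eq_of_mapsTo {X Y : Type*} [TopologicalSpace X]
    [TopologicalSpace Y] {f : X → Y} {Z : Set X} {A : Set Y} (hf : ContinuousOn f Z)
    (hZ : IsPathConnected Z) (hmaps : MapsTo f Z A) {x y : X} (hx : x ∈ Z) (hy : y ∈ Z) :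
    pathComponentIn A (f x) = pathComponentIn A (f y) := by
  have hfy : f y ∈ pathComponentIn A (f x) :=
    (hZ.image' hf).subset_pathComponentIn (mem_image_of_mem f hx) (image_subset_iff.2 hmaps)
      (mem_image_of_mem f hy)
  exact (pathComponentIn_congr hfy).symm

theorem MeasureTheory.withDensity_apply_pos_of_ae_pos {α : Type*} [MeasurableSpace α]
    {ν : Measure α} {ρ : α → ENNReal} (hρ : AEMeasurable ρ ν) {s : Set α} (hs : 0 < ν s)
    (hpos : ∀ᵐ x ∂ν, x ∈ s → 0 < ρ x) : 0 < ν.withDensity ρ s := by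
  refine pos_iff_ne_zero.2 fun h ↦ hs.ne' (measure_mono_null_ae ?_
    ((withDensity_apply_eq_zero' hρ).1 h))
  filter_upwards [hpos] with x hx hxs
  exact ⟨(hx hxs).ne', hxs⟩

theorem topological_barrier_general
    {m d : ℕ} (Z : Set (Fin m → ℝ))
    (hZopen : IsOpen Z) (hZpc : IsPathConnected Z)
    (μ : Measure (Fin m → ℝ))
    (ρ : (Fin m → ℝ) → ENNReal)
    (hρmeas : Measurable ρ)
    (hμ : μ = volume.withDensity ρ)
    (hρpos : ∀ᵐ z ∂(volume : Measure (Fin m → ℝ)), z ∈ Z → 0 < ρ z)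
    (f : (Fin m → ℝ) → (Fin d → ℝ)) (hf : ContinuousOn f Z)
    (Asafe Aforb : Set (Fin d → ℝ))
    (hAforb : Aforb = Set.univ \ Asafe) (hAforbOpen : IsOpen Aforb)
    (aL aR : Fin d → ℝ)
    (UL UR : Set (Fin d → ℝ))
    (hUL : UL = pathComponentIn Asafe aL)
    (hUR : UR = pathComponentIn Asafe aR)
    (hdistinct : UL ≠ UR)
    (zL zR : Fin m → ℝ) (hzL : zL ∈ Z) (hzR : zR ∈ Z)
    (hfL : f zL ∈ UL) (hfR : f zR ∈ UR) :
    {z ∈ Z | f z ∈ Aforb}.Nonempty ∧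
    IsOpen {z ∈ Z | f z ∈ Aforb} ∧
    0 < μ {z ∈ Z | f z ∈ Aforb} := by
  have hseam_open : IsOpen {z ∈ Z | f z ∈ Aforb} := hf.isOpen_inter_preimage hZopen hAforbOpen
  have hseam_ne : {z ∈ Z | f z ∈ Aforb}.Nonempty := by
    by_contra hempty
    have hmaps : MapsTo f Z Asafe := fun z hz ↦
      by_contra fun hz' ↦ hempty ⟨z, hz, hAforb ▸ ⟨mem_univ _, hz'⟩⟩
    subst hUL hUR
    apply hdistinct
    rw [← pathComponentIn_congr hfL, ← pathComponentIn_congr hfR,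
      hf.pathComponentIn_eq_of_mapsTo hZpc hmaps hzL hzR]
  refine ⟨hseam_ne, hseam_open, ?_⟩
  subst hμ
  refine withDensity_apply_pos_of_ae_pos hρmeas.aemeasurable
    (hseam_open.measure_pos _ hseam_ne) ?_
  filter_upwards [hρpos] with z hz hzseam using hz hzseam.1

/-- **Topological Barrier (Lemma: nonempty, open seam with positive probability mass).**
Let `Z ⊆ ℝ^m` be nonempty, open, path-connected, and let `μ` be a probability measure
that is absolutely continuous w.r.t. Lebesgue measure with density `ρ` which is a.e.
positive on `Z` and a.e. bounded below by a positive constant on every compact `K ⊆ Z`.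
Let `f` be continuous on `Z`, let `U_L ≠ U_R` be path components of `A_safe`, and suppose
the forbidden region `A_forb = ℝ^d \ A_safe` is open. If `f` hits both `U_L` and `U_R`
from `Z`, then the seam `{z ∈ Z : f z ∈ A_forb}` is nonempty, open, and `μ`-positive. -/
theorem topological_barrier
    {m d : ℕ} (Z : Set (Fin m → ℝ))
    (hZne : Z.Nonempty) (hZopen : IsOpen Z) (hZpc : IsPathConnected Z)
    (μ : Measure (Fin m → ℝ)) [IsProbabilityMeasure μ]
    (ρ : (Fin m → ℝ) → ENNReal)
    (hρmeas : Measurable ρ)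
    (hμ : μ = volume.withDensity ρ)
    (hρpos : ∀ᵐ z ∂(volume : Measure (Fin m → ℝ)), z ∈ Z → 0 < ρ z)
    (hρmin : ∀ K : Set (Fin m → ℝ), K ⊆ Z → IsCompact K →
      ∃ ρmin : ENNReal, 0 < ρmin ∧ ∀ᵐ z ∂(volume : Measure (Fin m → ℝ)), z ∈ K → ρmin ≤ ρ z)
    (f : (Fin m → ℝ) → (Fin d → ℝ)) (hf : ContinuousOn f Z)
    (Asafe Aforb : Set (Fin d → ℝ))
    (hAforb : Aforb = Set.univ \ Asafe) (hAforbOpen : IsOpen Aforb)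
    (aL aR : Fin d → ℝ) (haL : aL ∈ Asafe) (haR : aR ∈ Asafe)
    (UL UR : Set (Fin d → ℝ))
    (hUL : UL = pathComponentIn Asafe aL)
    (hUR : UR = pathComponentIn Asafe aR)
    (hdistinct : UL ≠ UR)
    (zL zR : Fin m → ℝ) (hzL : zL ∈ Z) (hzR : zR ∈ Z)
    (hfL : f zL ∈ UL) (hfR : f zR ∈ UR) :
    {z ∈ Z | f z ∈ Aforb}.Nonempty ∧
    IsOpen {z ∈ Z | f z ∈ Aforb} ∧
    0 < μ {z ∈ Z | f z ∈ Aforb} :=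
  topological_barrier_general Z hZopen hZpc μ ρ hρmeas hμ hρpos f hf Asafe Aforb hAforb hAforbOpen
    aL aR UL UR hUL hUR hdistinct zL zR hzL hzR hfL hfR
end

section
/- Let K ≥ 1 and let Φ_0, …, Φ_{K−1} : ℝ^d → ℝ^d be C¹ diffeomorphisms such that for each t there is λ_t > 0 with ‖DΦ_t(z) v‖ ≥ λ_t ‖v‖ for all z, v ∈ ℝ^d, and set F^{(K)} := Φ_{K−1} ∘ ⋯ ∘ Φ_0. Let μ be a probability measure on ℝ^d, absolutely continuous with respect to Lebesgue measure, with density ρ ≤ ρ_max almost everywhere. Let M_δ ⊆ ℝ^d be measurable with Lebesgue volume Vol(M_δ) ≤ C δ^{d−k} for constants C > 0, δ > 0, and integers 0 ≤ k < d. Then F^{(K)} is injective, its derivative satisfies ‖DF^{(K)}(z) v‖ ≥ (∏_{t=0}^{K−1} λ_t) ‖v‖ for all z, v, and for any measurable S ⊆ M_δ the hallucination probability satisfies μ({z : F^{(K)}(z) ∉ S}) ≥ 1 − C ρ_max (∏_{t=0}^{K−1} λ_t)^{−d} δ^{d−k}. In particular, if λ_t ≥ λ ∈ (0,1] for all t,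 then μ({z : F^{(K)}(z) ∉ S}) ≥ 1 − C ρ_max λ^{−dK} δ^{d−k}. -/
/-!
By the chain rule the expansion constants multiply, so `DF^{(K)}` expands every vector by at least
`Λ = ∏ λ_t`; an endomorphism of `ℝ^d` with this property is onto and maps the unit ball over the
ball of radius `Λ`, hence `|det DF^{(K)}| ≥ Λ^d`. The change-of-variables formula for the injective
map `F^{(K)}` then gives `Λ^d Vol(F⁻¹ S) ≤ Vol(S) ≤ Vol(M_δ)`, and the density bound turns this
into `μ(F⁻¹ S) ≤ ρ_max Λ^{-d} C δ^{d-k}`.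
-/

open MeasureTheory

/-- `compChain Φ K = Φ_{K-1} ∘ ⋯ ∘ Φ_0`. -/
def compChain {E : Type*} (Φ : ℕ → E → E) : ℕ → E → E
  | 0 => id
  | K + 1 => Φ K ∘ compChain Φ K

theorem ENNReal.ofReal_mul_ofReal_le (a b : ℝ) :
    ENNReal.ofReal a * ENNReal.ofReal b ≤ ENNReal.ofReal (a * b) := by
  rcases le_or_gt 0 a with ha | ha
  · rw [ENNReal.ofReal_mul ha]
  · simp [ENNReal.ofReal_of_nonpos ha.le]

theorem withDensity_apply_le_of_ae_le {α : Type*} [MeasurableSpace α] {μ : Measure α}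
    {ρ : α → ENNReal} {c : ENNReal} (hρ : ∀ᵐ x ∂μ, ρ x ≤ c) {s : Set α} (hs : MeasurableSet s) :
    μ.withDensity ρ s ≤ c * μ s := by
  rw [withDensity_apply ρ hs, ← setLIntegral_const]
  exact lintegral_mono_ae (ae_restrict_of_ae hρ)

section AddHaar

variable {E : Type*} [NormedAddCommGroup E] [NormedSpace ℝ E] [FiniteDimensional ℝ E]
  [MeasurableSpace E] [BorelSpace E]

theorem ContinuousLinearMap.pow_finrank_le_abs_det {B : E →L[ℝ] E} {Λ : ℝ} (hΛ : 0 < Λ)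
    (hB : ∀ v, Λ * ‖v‖ ≤ ‖B v‖) : Λ ^ Module.finrank ℝ E ≤ |B.det| := by
  set μ : Measure E := Measure.addHaar
  have hinj : Function.Injective B := fun v w h => by
    have := hB (v - w)
    rw [map_sub, h, sub_self, norm_zero] at this
    exact sub_eq_zero.1 (norm_eq_zero.1 (by nlinarith [norm_nonneg (v - w)]))
  have hsurj : Function.Surjective B := LinearMap.injective_iff_surjective.1 hinj
  have hball : Metric.closedBall (0 : E) Λ ⊆ B '' Metric.closedBall 0 1 := by
    intro w hw
    obtain ⟨v, rfl⟩ := hsurj w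
    refine ⟨v, ?_, rfl⟩
    rw [mem_closedBall_zero_iff] at hw ⊢
    nlinarith [hB v]
  have hvol : ENNReal.ofReal (Λ ^ Module.finrank ℝ E) * μ (Metric.closedBall 0 1)
      ≤ ENNReal.ofReal |B.det| * μ (Metric.closedBall 0 1) := by
    rw [← Measure.addHaar_closedBall' μ 0 hΛ.le, ← Measure.addHaar_image_continuousLinearMap]
    exact measure_mono hball
  rwa [ENNReal.mul_le_mul_iff_left (Metric.measure_closedBall_pos μ 0 one_pos).ne'
    measure_closedBall_lt_top.ne, ENNReal.ofReal_le_ofReal_iff (abs_nonneg _)] at hvol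

theorem addHaar_preimage_le_of_le_norm_fderiv (μ : Measure E) [μ.IsAddHaarMeasure]
    {f : E → E} {f' : E → E →L[ℝ] E} {Λ : ℝ} (hΛ : 0 < Λ) (hf : Function.Injective f)
    (hf' : ∀ x, HasFDerivAt f (f' x) x) (hbound : ∀ x v, Λ * ‖v‖ ≤ ‖f' x v‖)
    {s : Set E} (hs : MeasurableSet (f ⁻¹' s)) :
    μ (f ⁻¹' s) ≤ ENNReal.ofReal (Λ⁻¹ ^ Module.finrank ℝ E) * μ s := by
  set n := Module.finrank ℝ E
  have key : ENNReal.ofReal (Λ ^ n) * μ (f ⁻¹' s) ≤ μ s :=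
    calc ENNReal.ofReal (Λ ^ n) * μ (f ⁻¹' s)
        = ∫⁻ _ in f ⁻¹' s, ENNReal.ofReal (Λ ^ n) ∂μ := (setLIntegral_const _ _).symm
      _ ≤ ∫⁻ x in f ⁻¹' s, ENNReal.ofReal |(f' x).det| ∂μ := by
        gcongr with x
        exact (f' x).pow_finrank_le_abs_det hΛ (hbound x)
      _ = μ (f '' (f ⁻¹' s)) := lintegral_abs_det_fderiv_eq_addHaar_image μ hs
          (fun x _ => (hf' x).hasFDerivWithinAt) hf.injOn
      _ ≤ μ s := measure_mono (Set.image_preimage_subset f s)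
  calc μ (f ⁻¹' s) = ENNReal.ofReal (Λ⁻¹ ^ n) * (ENNReal.ofReal (Λ ^ n) * μ (f ⁻¹' s)) := by
        rw [← mul_assoc, ← ENNReal.ofReal_mul (by positivity), ← mul_pow,
          inv_mul_cancel₀ hΛ.ne', one_pow, ENNReal.ofReal_one, one_mul]
    _ ≤ ENNReal.ofReal (Λ⁻¹ ^ n) * μ s := by gcongr

theorem withDensity_preimage_le_of_le_norm_fderiv (μ : Measure E) [μ.IsAddHaarMeasure]
    {ρ : E → ENNReal} {c : ENNReal} (hρ : ∀ᵐ x ∂μ, ρ x ≤ c)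
    {f : E → E} {f' : E → E →L[ℝ] E} {Λ : ℝ} (hΛ : 0 < Λ) (hf : Function.Injective f)
    (hf' : ∀ x, HasFDerivAt f (f' x) x) (hbound : ∀ x v, Λ * ‖v‖ ≤ ‖f' x v‖)
    {s : Set E} (hs : MeasurableSet (f ⁻¹' s)) :
    μ.withDensity ρ (f ⁻¹' s) ≤ c * (ENNReal.ofReal (Λ⁻¹ ^ Module.finrank ℝ E) * μ s) :=
  (withDensity_apply_le_of_ae_le hρ hs).trans
    (by gcongr; exact addHaar_preimage_le_of_le_norm_fderiv μ hΛ hf hf' hbound hs)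

end AddHaar

section compChain

variable {E : Type*} {Φ : ℕ → E → E} {K : ℕ}

theorem compChain_injective (hΦ : ∀ t < K, Function.Injective (Φ t)) :
    Function.Injective (compChain Φ K) := by
  induction K with
  | zero => exact Function.injective_id
  | succ K ih => exact (hΦ K K.lt_succ_self).comp (ih fun t ht => hΦ t (ht.trans K.lt_succ_self))

variable [NormedAddCommGroup E] [NormedSpace ℝ E]

theorem compChain_differentiable (hΦ : ∀ t < K, Differentiable ℝ (Φ t)) :
    Differentiable ℝ (compChain Φ K) := by
  induction K with
  | zero => exact differentiable_id
  | succ K ih => exact (hΦ K K.lt_succ_self).comp (ih fun t ht => hΦ t (ht.trans K.lt_succ_self))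

theorem prod_mul_norm_le_norm_fderiv_compChain {lam : ℕ → ℝ}
    (hΦ : ∀ t < K, Differentiable ℝ (Φ t)) (hlam : ∀ t < K, 0 ≤ lam t)
    (hD : ∀ t < K, ∀ z v, lam t * ‖v‖ ≤ ‖fderiv ℝ (Φ t) z v‖) (z v : E) :
    (∏ t ∈ Finset.range K, lam t) * ‖v‖ ≤ ‖fderiv ℝ (compChain Φ K) z v‖ := by
  induction K with
  | zero => simp [compChain]
  | succ K ih =>
    have hlt := K.lt_succ_self
    have hΦ' : ∀ t < K, Differentiable ℝ (Φ t) := fun t ht => hΦ t (ht.trans hlt)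
    rw [compChain, fderiv_comp z (hΦ K hlt _) (compChain_differentiable hΦ' z),
      Finset.prod_range_succ, mul_comm _ (lam K), mul_assoc]
    calc lam K * ((∏ t ∈ Finset.range K, lam t) * ‖v‖)
        ≤ lam K * ‖fderiv ℝ (compChain Φ K) z v‖ :=
          mul_le_mul_of_nonneg_left (ih hΦ' (fun t ht => hlam t (ht.trans hlt))
            (fun t ht => hD t (ht.trans hlt))) (hlam K hlt)
      _ ≤ _ := hD K hlt _ _

end compChain

theorem k_step_precision_tradeoff_general
    {d k K : ℕ}
    (Φ : ℕ → EuclideanSpace ℝ (Fin d) → EuclideanSpace ℝ (Fin d))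
    (Φinv : ℕ → EuclideanSpace ℝ (Fin d) → EuclideanSpace ℝ (Fin d))
    (hΦ : ∀ t < K, ContDiff ℝ 1 (Φ t))
    (hleft : ∀ t < K, Function.LeftInverse (Φinv t) (Φ t))
    (lam : ℕ → ℝ) (hlam : ∀ t < K, 0 < lam t)
    (hD : ∀ t < K, ∀ z v, lam t * ‖v‖ ≤ ‖fderiv ℝ (Φ t) z v‖)
    (ρ : EuclideanSpace ℝ (Fin d) → ENNReal)
    (μ : Measure (EuclideanSpace ℝ (Fin d))) [IsProbabilityMeasure μ]
    (hμ : μ = volume.withDensity ρ)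
    (ρmax : ℝ)
    (hρmax : ∀ᵐ z ∂(volume : Measure (EuclideanSpace ℝ (Fin d))), ρ z ≤ ENNReal.ofReal ρmax)
    (C δ : ℝ)
    (Mδ : Set (EuclideanSpace ℝ (Fin d)))
    (hvol : volume Mδ ≤ ENNReal.ofReal (C * δ ^ (d - k))) :
    Function.Injective (compChain Φ K) ∧
    (∀ z v, (∏ t ∈ Finset.range K, lam t) * ‖v‖ ≤ ‖fderiv ℝ (compChain Φ K) z v‖) ∧
    (∀ S : Set (EuclideanSpace ℝ (Fin d)), MeasurableSet S → S ⊆ Mδ →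
      1 - ENNReal.ofReal (C * ρmax * ((∏ t ∈ Finset.range K, lam t)⁻¹) ^ d * δ ^ (d - k))
        ≤ μ {z | compChain Φ K z ∉ S}) ∧
    (∀ lam0 : ℝ, lam0 ∈ Set.Ioc (0 : ℝ) 1 → (∀ t < K, lam0 ≤ lam t) →
      ∀ S : Set (EuclideanSpace ℝ (Fin d)), MeasurableSet S → S ⊆ Mδ →
        1 - ENNReal.ofReal (C * ρmax * (lam0⁻¹) ^ (d * K) * δ ^ (d - k))
          ≤ μ {z | compChain Φ K z ∉ S}) := by
  set F := compChain Φ K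
  set Λ := ∏ t ∈ Finset.range K, lam t
  have hΛ : 0 < Λ := Finset.prod_pos fun t ht => hlam t (Finset.mem_range.1 ht)
  have hdiff : ∀ t < K, Differentiable ℝ (Φ t) := fun t ht => (hΦ t ht).differentiable one_ne_zero
  have hF : Differentiable ℝ F := compChain_differentiable hdiff
  have hinj : Function.Injective F := compChain_injective fun t ht => (hleft t ht).injective
  have hderiv : ∀ z v, Λ * ‖v‖ ≤ ‖fderiv ℝ F z v‖ :=
    prod_mul_norm_le_norm_fderiv_compChain hdiff (fun t ht => (hlam t ht).le) hD
  have hmiss : ∀ S, MeasurableSet S → S ⊆ Mδ → ∀ b : ℝ, Λ⁻¹ ^ d ≤ b →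
      1 - ENNReal.ofReal (C * ρmax * b * δ ^ (d - k)) ≤ μ {z | F z ∉ S} := by
    intro S hS hSM b hb
    have hA : MeasurableSet (F ⁻¹' S) := hF.continuous.measurable hS
    change _ ≤ μ (F ⁻¹' S)ᶜ
    rw [prob_compl_eq_one_sub hA]
    gcongr
    calc μ (F ⁻¹' S) ≤ ENNReal.ofReal ρmax * (ENNReal.ofReal (Λ⁻¹ ^ d) * volume S) := by
          simpa [hμ] using withDensity_preimage_le_of_le_norm_fderiv volume hρmax hΛ hinj
            (fun z => (hF z).hasFDerivAt) hderiv hA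
      _ ≤ ENNReal.ofReal ρmax * (ENNReal.ofReal b * ENNReal.ofReal (C * δ ^ (d - k))) := by
          gcongr
          exact (measure_mono hSM).trans hvol
      _ ≤ ENNReal.ofReal (ρmax * (b * (C * δ ^ (d - k)))) :=
          (mul_le_mul_right (ENNReal.ofReal_mul_ofReal_le _ _) _).trans
            (ENNReal.ofReal_mul_ofReal_le _ _)
      _ = ENNReal.ofReal (C * ρmax * b * δ ^ (d - k)) := by ring_nf
  refine ⟨hinj, hderiv, fun S hS hSM => hmiss S hS hSM _ le_rfl, ?_⟩
  intro lam0 hlam0 hle S hS hSM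
  refine hmiss S hS hSM _ ?_
  have hpowΛ : lam0 ^ K ≤ Λ := by
    simpa using Finset.prod_le_prod (fun t _ => hlam0.1.le) fun t ht => hle t (Finset.mem_range.1 ht)
  rw [pow_mul', inv_pow lam0 K]
  gcongr
  exact pow_pos hlam0.1 K

/-- **K-step precision tradeoff.**
Let `Φ_0, …, Φ_{K−1}` be `C¹` diffeomorphisms of `ℝ^d` with `‖DΦ_t(z) v‖ ≥ λ_t ‖v‖`
everywhere, and `F^{(K)} = Φ_{K−1} ∘ ⋯ ∘ Φ_0`. Let `μ` be a probability measure
absolutely continuous w.r.t. Lebesgue measure with density `ρ ≤ ρ_max` a.e., and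
`Vol(M_δ) ≤ C δ^{d−k}`. Then `F^{(K)}` is injective, `‖DF^{(K)}(z) v‖ ≥ (∏ λ_t)‖v‖`,
and for any measurable `S ⊆ M_δ` the hallucination probability satisfies
`μ{z : F^{(K)} z ∉ S} ≥ 1 − C ρ_max (∏ λ_t)^{−d} δ^{d−k}`; in particular if
`λ_t ≥ λ ∈ (0,1]` for all `t`, it is at least `1 − C ρ_max λ^{−dK} δ^{d−k}`. -/
theorem k_step_precision_tradeoff
    {d k K : ℕ} (hK : 1 ≤ K) (hkd : k < d)
    (Φ : ℕ → EuclideanSpace ℝ (Fin d) → EuclideanSpace ℝ (Fin d))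
    (Φinv : ℕ → EuclideanSpace ℝ (Fin d) → EuclideanSpace ℝ (Fin d))
    (hΦ : ∀ t < K, ContDiff ℝ 1 (Φ t))
    (hΦinv : ∀ t < K, ContDiff ℝ 1 (Φinv t))
    (hleft : ∀ t < K, Function.LeftInverse (Φinv t) (Φ t))
    (hright : ∀ t < K, Function.RightInverse (Φinv t) (Φ t))
    (lam : ℕ → ℝ) (hlam : ∀ t < K, 0 < lam t)
    (hD : ∀ t < K, ∀ z v, lam t * ‖v‖ ≤ ‖fderiv ℝ (Φ t) z v‖)
    (ρ : EuclideanSpace ℝ (Fin d) → ENNReal) (hρmeas : Measurable ρ)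
    (μ : Measure (EuclideanSpace ℝ (Fin d))) [IsProbabilityMeasure μ]
    (hμ : μ = volume.withDensity ρ)
    (ρmax : ℝ)
    (hρmax : ∀ᵐ z ∂(volume : Measure (EuclideanSpace ℝ (Fin d))), ρ z ≤ ENNReal.ofReal ρmax)
    (C δ : ℝ) (hC : 0 < C) (hδ : 0 < δ)
    (Mδ : Set (EuclideanSpace ℝ (Fin d))) (hMmeas : MeasurableSet Mδ)
    (hvol : volume Mδ ≤ ENNReal.ofReal (C * δ ^ (d - k))) :
    Function.Injective (compChain Φ K) ∧
    (∀ z v, (∏ t ∈ Finset.range K, lam t) * ‖v‖ ≤ ‖fderiv ℝ (compChain Φ K) z v‖) ∧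
    (∀ S : Set (EuclideanSpace ℝ (Fin d)), MeasurableSet S → S ⊆ Mδ →
      1 - ENNReal.ofReal (C * ρmax * ((∏ t ∈ Finset.range K, lam t)⁻¹) ^ d * δ ^ (d - k))
        ≤ μ {z | compChain Φ K z ∉ S}) ∧
    (∀ lam0 : ℝ, lam0 ∈ Set.Ioc (0 : ℝ) 1 → (∀ t < K, lam0 ≤ lam t) →
      ∀ S : Set (EuclideanSpace ℝ (Fin d)), MeasurableSet S → S ⊆ Mδ →
        1 - ENNReal.ofReal (C * ρmax * (lam0⁻¹) ^ (d * K) * δ ^ (d - k))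
          ≤ μ {z | compChain Φ K z ∉ S}) :=
  k_step_precision_tradeoff_general Φ Φinv hΦ hleft lam hlam hD ρ μ hμ ρmax hρmax C δ Mδ hvol
end

section
/- Let p ≥ 0 be a real number and q ≥ 1 an integer. Then Σ_{j=1}^q j^p ≤ ((q+1)^{p+1} − 1)/(p+1). Consequently, if γ ∈ (0,1), T ≥ 1 is an integer, α, β ≥ 0 with α + β < 1, and ρ_1, …, ρ_q ∈ [0,1] satisfy ρ_j ≤ γ^T · j^p for all j and Σ_{j=1}^q ρ_j ≥ 1 − α − β, then q ≥ (1 + (p+1)(1 − α − β)/γ^T)^{1/(p+1)} − 1. -/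
/-!
Bernoulli's inequality `(1 + 1/a)^(p+1) ≥ 1 + (p+1)/a` gives
`(p+1) a^p ≤ (a+1)^(p+1) - a^(p+1)`, which telescopes to the bound on `Σ j^p`.
The mass condition then forces `1 - α - β ≤ γ^T ((q+1)^(p+1) - 1)/(p+1)`,
and solving for `q` gives the lower bound.
-/

open Finset

lemma mul_rpow_le_add_one_rpow_sub_rpow {p a : ℝ} (hp : 0 ≤ p) (ha : 0 < a) :
    (p + 1) * a ^ p ≤ (a + 1) ^ (p + 1) - a ^ (p + 1) := by
  have bernoulli : 1 + (p + 1) * a⁻¹ ≤ (1 + a⁻¹) ^ (p + 1) :=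
    one_add_mul_self_le_rpow_one_add (by linarith [inv_pos.2 ha]) (by linarith)
  have factor : (a + 1) ^ (p + 1) = a ^ (p + 1) * (1 + a⁻¹) ^ (p + 1) := by
    rw [← Real.mul_rpow ha.le (by positivity), mul_add, mul_inv_cancel₀ ha.ne', mul_one]
  have expand : a ^ (p + 1) * (1 + (p + 1) * a⁻¹) = a ^ (p + 1) + (p + 1) * a ^ p := by
    rw [Real.rpow_add_one ha.ne']
    field_simp
  rw [factor]
  nlinarith [mul_le_mul_of_nonneg_left bernoulli (Real.rpow_nonneg ha.le (p + 1))]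

lemma sum_Icc_rpow_le {p : ℝ} (hp : 0 ≤ p) (q : ℕ) :
    ∑ j ∈ Icc 1 q, (j : ℝ) ^ p ≤ (((q : ℝ) + 1) ^ (p + 1) - 1) / (p + 1) := by
  have hp1 : 0 < p + 1 := by linarith
  induction q with
  | zero => simp
  | succ n ih =>
    rw [sum_Icc_succ_top (by omega), Nat.cast_succ, le_div_iff₀ hp1]
    rw [le_div_iff₀ hp1] at ih
    have step := mul_rpow_le_add_one_rpow_sub_rpow hp (by positivity : (0 : ℝ) < n + 1)
    nlinarith

lemma one_add_div_rpow_le {r g c x : ℝ} (hr : 0 < r) (hg : 0 < g) (hc : 0 ≤ c) (hx : 0 ≤ x)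
    (hmass : c ≤ g * ((x ^ r - 1) / r)) :
    (1 + r * c / g) ^ (1 / r) ≤ x := by
  rw [one_div, Real.rpow_inv_le_iff_of_pos (by positivity) hx hr]
  rw [mul_div_assoc', le_div_iff₀ hr] at hmass
  rw [← le_sub_iff_add_le', div_le_iff₀ hg]
  linarith

theorem polynomial_amplification_insufficient_general
    (p : ℝ) (hp : 0 ≤ p) (q : ℕ) :
    (∑ j ∈ Finset.Icc 1 q, ((j : ℝ) ^ p))
        ≤ (((q : ℝ) + 1) ^ (p + 1) - 1) / (p + 1) ∧
    ∀ (γ : ℝ), γ ∈ Set.Ioo (0 : ℝ) 1 → ∀ T : ℕ, 1 ≤ T →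
      ∀ α β : ℝ, 0 ≤ α → 0 ≤ β → α + β < 1 →
      ∀ ρ : ℕ → ℝ, (∀ j ∈ Finset.Icc 1 q, ρ j ∈ Set.Icc (0 : ℝ) 1) →
        (∀ j ∈ Finset.Icc 1 q, ρ j ≤ γ ^ T * (j : ℝ) ^ p) →
        1 - α - β ≤ ∑ j ∈ Finset.Icc 1 q, ρ j →
        (1 + (p + 1) * (1 - α - β) / γ ^ T) ^ (1 / (p + 1)) - 1 ≤ (q : ℝ) := by
  refine ⟨sum_Icc_rpow_le hp q, ?_⟩
  rintro γ ⟨hγ, -⟩ T - α β - - hαβ ρ - hρ hmass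
  have hγT : 0 < γ ^ T := pow_pos hγ T
  have hbound : 1 - α - β ≤ γ ^ T * ((((q : ℝ) + 1) ^ (p + 1) - 1) / (p + 1)) :=
    calc 1 - α - β ≤ ∑ j ∈ Icc 1 q, ρ j := hmass
      _ ≤ ∑ j ∈ Icc 1 q, γ ^ T * (j : ℝ) ^ p := sum_le_sum hρ
      _ = γ ^ T * ∑ j ∈ Icc 1 q, (j : ℝ) ^ p := (mul_sum _ _ _).symm
      _ ≤ _ := mul_le_mul_of_nonneg_left (sum_Icc_rpow_le hp q) hγT.le
  have := one_add_div_rpow_le (by linarith) hγT (by linarith) (by positivity) hbound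
  linarith

/-- **Polynomial amplification is insufficient (part (i) of the amplification-rate
theorem).** For real `p ≥ 0` and integer `q ≥ 1`,
`Σ_{j=1}^q j^p ≤ ((q+1)^{p+1} − 1)/(p+1)`. Consequently, if `γ ∈ (0,1)`, `T ≥ 1`,
`α, β ≥ 0` with `α + β < 1`, and `ρ_j ∈ [0,1]` satisfy `ρ_j ≤ γ^T j^p` for all `j`
and `Σ_{j=1}^q ρ_j ≥ 1 − α − β`, then
`q ≥ (1 + (p+1)(1 − α − β)/γ^T)^{1/(p+1)} − 1`. -/
theorem polynomial_amplification_insufficient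
    (p : ℝ) (hp : 0 ≤ p) (q : ℕ) (hq : 1 ≤ q) :
    (∑ j ∈ Finset.Icc 1 q, ((j : ℝ) ^ p))
        ≤ (((q : ℝ) + 1) ^ (p + 1) - 1) / (p + 1) ∧
    ∀ (γ : ℝ), γ ∈ Set.Ioo (0 : ℝ) 1 → ∀ T : ℕ, 1 ≤ T →
      ∀ α β : ℝ, 0 ≤ α → 0 ≤ β → α + β < 1 →
      ∀ ρ : ℕ → ℝ, (∀ j ∈ Finset.Icc 1 q, ρ j ∈ Set.Icc (0 : ℝ) 1) →
        (∀ j ∈ Finset.Icc 1 q, ρ j ≤ γ ^ T * (j : ℝ) ^ p) →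
        1 - α - β ≤ ∑ j ∈ Finset.Icc 1 q, ρ j →
        (1 + (p + 1) * (1 - α - β) / γ ^ T) ^ (1 / (p + 1)) - 1 ≤ (q : ℝ) :=
  polynomial_amplification_insufficient_general p hp q
end
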